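/- arXiv:1105.1488 — 2 statements merged into one kernel-verified Lean document; each statement's English description precedes it below -/
import Mathlib

section
/- Let n, m, M, N be natural numbers with m + 1 ≤ n, let v ∈ ℝ^{n×n} be invertible, β^η ∈ ℝ^{m×n}, β̃^η ∈ ℝ^{m×N}, β̃^ζ ∈ ℝ^{M×N}, and let K > 0 and c₁ > 0 be such that xᵀ B Bᵀ x ≥ c₁ ‖x‖² for all x ∈ ℝ^{m+M}. Then for every ξ ∈ ℝ^{1+m+M} with ‖ξ‖ = 1, the supremum over u ∈ Δ = {u ∈ ℝⁿ : uᵀ v vᵀ u ≤ K} of ξᵀ A(u) A(u)ᵀ ξ is at least min(K, c₁); in particular, the infimum over unit vectors ξ of this supremum is strictly positive. -/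
/-!
Write `ξ = (ξ₀, ξ₁)` and `b = Bᵀ ξ₁`. Then `ξᵀ A(u) A(u)ᵀ ξ = ‖ξ₀ (vᵀu, 0) + b‖²`, and since `v` is
invertible, `vᵀu` sweeps out the whole ball of radius `√K` as `u` ranges over `Δ`. Taking `w` on the
sphere and averaging the values at `±w`, the parallelogram law gives a value at least
`ξ₀² K + ‖b‖² ≥ ξ₀² K + c₁ ‖ξ₁‖² ≥ min K c₁`.
-/

open Matrix

theorem dotProduct_mul_transpose_mulVec {ι κ R : Type*} [Fintype ι] [Fintype κ] [CommSemiring R]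
    (A : Matrix ι κ R) (ξ : ι → R) :
    ξ ⬝ᵥ ((A * Aᵀ) *ᵥ ξ) = (ξ ᵥ* A) ⬝ᵥ (ξ ᵥ* A) := by
  rw [← mulVec_mulVec, dotProduct_mulVec, mulVec_transpose]

theorem vecMul_fromRows_replicateRow {ι κ R : Type*} [Fintype ι] [CommSemiring R]
    (r : κ → R) (B : Matrix ι κ R) (ξ : Fin 1 ⊕ ι → R) :
    ξ ᵥ* fromRows (replicateRow (Fin 1) r) B = ξ (Sum.inl 0) • r + (ξ ∘ Sum.inr) ᵥ* B := by
  ext j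
  simp [vecMul, dotProduct, mul_comm]

theorem parallelogram_law_dotProduct {ι R : Type*} [Fintype ι] [CommRing R] (x b : ι → R) :
    (x + b) ⬝ᵥ (x + b) + (-x + b) ⬝ᵥ (-x + b) = 2 * (x ⬝ᵥ x + b ⬝ᵥ b) := by
  simp only [add_dotProduct, dotProduct_add, neg_dotProduct, dotProduct_neg, dotProduct_comm b x]
  ring

theorem exists_dotProduct_self_eq {ι : Type*} [Fintype ι] [Nonempty ι] {K : ℝ} (hK : 0 ≤ K) :
    ∃ w : ι → ℝ, w ⬝ᵥ w = K := by
  classical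
  exact ⟨Pi.single (Classical.arbitrary ι) √K, by simp [Real.mul_self_sqrt hK]⟩

theorem sq_mul_add_le_ciSup {α ι ι' : Type*} [Fintype ι] [Fintype ι'] [Nonempty ι]
    (g : α → ι → ℝ) (hg : Function.Surjective g) {K : ℝ} (hK : 0 ≤ K) (t : ℝ)
    (b : ι ⊕ ι' → ℝ) :
    t ^ 2 * K + b ⬝ᵥ b ≤ ⨆ a : {a // g a ⬝ᵥ g a ≤ K},
      (t • Sum.elim (g a.1) 0 + b) ⬝ᵥ (t • Sum.elim (g a.1) 0 + b) := by
  set x : α → ι ⊕ ι' → ℝ := fun a => t • Sum.elim (g a) 0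
  have hx : ∀ a, x a ⬝ᵥ x a = t ^ 2 * (g a ⬝ᵥ g a) := fun a => by
    simp only [x, smul_dotProduct, dotProduct_smul, sumElim_dotProduct_sumElim, dotProduct_zero,
      add_zero, smul_eq_mul]
    ring
  have hbdd : BddAbove (Set.range fun a : {a // g a ⬝ᵥ g a ≤ K} => (x a + b) ⬝ᵥ (x a + b)) := by
    refine ⟨2 * (t ^ 2 * K + b ⬝ᵥ b), ?_⟩
    rintro _ ⟨⟨a, ha⟩, rfl⟩
    have := parallelogram_law_dotProduct (x a) b
    have := dotProduct_star_self_nonneg (-x a + b)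
    simp only [star_trivial] at this ⊢
    nlinarith [hx a, sq_nonneg t]
  obtain ⟨w, hw⟩ := exists_dotProduct_self_eq (ι := ι) hK
  obtain ⟨a, rfl⟩ := hg w
  obtain ⟨a', ha'⟩ := hg (-g a)
  have hxneg : x a' = -x a := by
    ext (i | i) <;> simp [x, ha']
  have hle := le_ciSup hbdd ⟨a, hw.le⟩
  have hle' := le_ciSup hbdd ⟨a', by rw [ha', neg_dotProduct, dotProduct_neg, neg_neg, hw]⟩
  have := parallelogram_law_dotProduct (x a) b
  rw [← hxneg] at this
  simp only at hle hle'
  nlinarith [hx a]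

/-- If `B Bᵀ ≥ c₁ I` and `m + 1 ≤ n`, then for every unit vector `ξ`
the supremum over `u ∈ Δ = {u : uᵀ v vᵀ u ≤ K}` of `ξᵀ A(u) A(u)ᵀ ξ` is at least
`min K c₁`; in particular the infimum over unit `ξ` of this supremum is positive. -/
theorem sup_quadratic_form_ge_min
    (n m M N : ℕ) (hmn : m + 1 ≤ n)
    (v : Matrix (Fin n) (Fin n) ℝ) (hv : IsUnit v)
    (βη : Matrix (Fin m) (Fin n) ℝ) (βη' : Matrix (Fin m) (Fin N) ℝ)
    (βζ' : Matrix (Fin M) (Fin N) ℝ)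
    (K c₁ : ℝ) (hK : 0 < K) (hc₁ : 0 < c₁)
    (B : Matrix (Fin m ⊕ Fin M) (Fin n ⊕ Fin N) ℝ)
    (hB : B = Matrix.fromBlocks βη βη' 0 βζ')
    (hBB : ∀ x : Fin m ⊕ Fin M → ℝ, c₁ * (x ⬝ᵥ x) ≤ x ⬝ᵥ ((B * Bᵀ) *ᵥ x))
    (A : (Fin n → ℝ) → Matrix (Fin 1 ⊕ (Fin m ⊕ Fin M)) (Fin n ⊕ Fin N) ℝ)
    (hA : ∀ u : Fin n → ℝ,
      A u = Matrix.fromBlocks (Matrix.replicateRow (Fin 1) (vᵀ *ᵥ u)) 0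
        (Matrix.fromRows βη (0 : Matrix (Fin M) (Fin n) ℝ)) (Matrix.fromRows βη' βζ')) :
    (∀ ξ : Fin 1 ⊕ (Fin m ⊕ Fin M) → ℝ, ξ ⬝ᵥ ξ = 1 →
      min K c₁ ≤
        ⨆ u : {u : Fin n → ℝ // (vᵀ *ᵥ u) ⬝ᵥ (vᵀ *ᵥ u) ≤ K},
          ξ ⬝ᵥ ((A u.1 * (A u.1)ᵀ) *ᵥ ξ)) ∧
    0 < ⨅ ξ : {ξ : Fin 1 ⊕ (Fin m ⊕ Fin M) → ℝ // ξ ⬝ᵥ ξ = 1},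
          ⨆ u : {u : Fin n → ℝ // (vᵀ *ᵥ u) ⬝ᵥ (vᵀ *ᵥ u) ≤ K},
            ξ.1 ⬝ᵥ ((A u.1 * (A u.1)ᵀ) *ᵥ ξ.1) := by
  have hA' : ∀ u, A u = fromRows (replicateRow (Fin 1) (Sum.elim (vᵀ *ᵥ u) 0)) B := by
    intro u
    rw [hA, hB]
    ext (i | i | i) (j | j) <;> simp
  have : Nonempty (Fin n) := ⟨⟨0, by omega⟩⟩
  have hsurj : Function.Surjective (vᵀ *ᵥ ·) :=
    mulVec_surjective_iff_isUnit.mpr (v.isUnit_transpose.mpr hv)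
  have main : ∀ ξ : Fin 1 ⊕ (Fin m ⊕ Fin M) → ℝ, ξ ⬝ᵥ ξ = 1 →
      min K c₁ ≤ ⨆ u : {u : Fin n → ℝ // (vᵀ *ᵥ u) ⬝ᵥ (vᵀ *ᵥ u) ≤ K},
        ξ ⬝ᵥ ((A u.1 * (A u.1)ᵀ) *ᵥ ξ) := by
    intro ξ hξ
    have hsplit : ξ (Sum.inl 0) ^ 2 + (ξ ∘ Sum.inr) ⬝ᵥ (ξ ∘ Sum.inr) = 1 := by
      simpa [dotProduct, Fintype.sum_sum_type, sq] using hξ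
    have hb := hBB (ξ ∘ Sum.inr)
    rw [dotProduct_mul_transpose_mulVec] at hb
    simp only [hA', dotProduct_mul_transpose_mulVec, vecMul_fromRows_replicateRow]
    refine le_trans ?_ (sq_mul_add_le_ciSup _ hsurj hK.le _ _)
    have := dotProduct_star_self_nonneg (ξ ∘ Sum.inr)
    simp only [star_trivial] at this
    nlinarith [min_le_left K c₁, min_le_right K c₁, sq_nonneg (ξ (Sum.inl 0))]
  refine ⟨main, ?_⟩
  have : Nonempty {ξ : Fin 1 ⊕ (Fin m ⊕ Fin M) → ℝ // ξ ⬝ᵥ ξ = 1} :=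
    ⟨⟨Pi.single (Sum.inl 0) 1, by simp⟩⟩
  exact (lt_min hK hc₁).trans_le (le_ciInf fun ξ => main ξ.1 ξ.2)
end

section
/- Let n > m ≥ 0, let v be an invertible n × n real matrix with columns v₁,…,vₙ, let a ∈ ℝⁿ, β ∈ ℝ^{m×n}, K > 0, and let a₀ ∈ ℝ, a₂ ≤ 0 and g ∈ ℝᵐ. Let Q = (v vᵀ)⁻¹, let q₁,…,qₙ be the columns of (vᵀ)⁻¹, and define the m+1 vectors ψ_k = Σ_{i=1}^n β_{ki} q_i for k = 1,…,m and ψ_{m+1} = Q a. Define F(u) = a₀ ⟨u, a⟩ + (a₂/2) uᵀ v vᵀ u + Σ_{k=1}^m g_k ⟨u, Σ_{i=1}^n β_{ki} v_i⟩. Then there exist real numbers ν₁,…,ν_{m+1} such that u* = Σ_{k=1}^{m+1} ν_k ψ_k satisfies uᵀ* v vᵀ u* ≤ K and F(u) ≤ F(u*) for all u ∈ ℝⁿ with uᵀ v vᵀ u ≤ K; that is, the constrained maximizer of F can be chosen as a linear combination of the m+1 fixed vectors ψ₁,…,ψ_{m+1}. -/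
/-!
In the coordinates `w = vᵀ u` the constraint is `‖w‖² ≤ K` and
`F u = ⟪w, c⟫ + (a₂/2) ‖w‖²` with `c = a₀ v⁻¹ a + βᵀ g`. Projecting `w` orthogonally onto `ℝ c`
keeps `⟪w, c⟫` and does not increase `‖w‖`, so since `a₂ ≤ 0` the maximum over the ball is
attained on the compact segment `ℝ c ∩ ball`, at some `t c`. Pulling back,
`(vᵀ)⁻¹ (t c) = Σ_k t g_k ψ_k + t a₀ ψ_{m+1}`, because `(vᵀ)⁻¹ β_k = ψ_k` and
`(vᵀ)⁻¹ v⁻¹ a = Q a`.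
-/

open Matrix

section LinQuad

variable {E : Type*} [NormedAddCommGroup E] [InnerProductSpace ℝ E]

open Metric Submodule

noncomputable def linQuad (c : E) (a₂ : ℝ) (w : E) : ℝ := inner ℝ w c + a₂ / 2 * ‖w‖ ^ 2

theorem continuous_linQuad (c : E) (a₂ : ℝ) : Continuous (linQuad c a₂) := by
  unfold linQuad; fun_prop

theorem linQuad_le_starProjection {U : Submodule ℝ E} [U.HasOrthogonalProjection] {c : E}
    (hc : c ∈ U) {a₂ : ℝ} (ha₂ : a₂ ≤ 0) (w : E) :
    linQuad c a₂ w ≤ linQuad c a₂ (U.starProjection w) := by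
  have hnorm : ‖U.starProjection w‖ ^ 2 ≤ ‖w‖ ^ 2 :=
    pow_le_pow_left₀ (norm_nonneg _) (U.norm_starProjection_apply_le w) 2
  unfold linQuad
  rw [inner_starProjection_left_eq_right, U.starProjection_eq_self_iff.mpr hc]
  exact add_le_add_right (mul_le_mul_of_nonpos_left hnorm (by linarith)) _

theorem exists_smul_isMaxOn_linQuad (c : E) {a₂ : ℝ} (ha₂ : a₂ ≤ 0) {r : ℝ} (hr : 0 ≤ r) :
    ∃ t : ℝ, t • c ∈ closedBall (0 : E) r ∧ IsMaxOn (linQuad c a₂) (closedBall 0 r) (t • c) := by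
  set U := ℝ ∙ c
  obtain ⟨x, hx, hmax⟩ := (isCompact_closedBall (0 : U) r).exists_isMaxOn
    (nonempty_closedBall.mpr hr) (f := linQuad c a₂ ∘ Subtype.val)
    ((continuous_linQuad c a₂).comp continuous_subtype_val).continuousOn
  obtain ⟨t, ht⟩ := mem_span_singleton.mp x.2
  rw [mem_closedBall_zero_iff, Submodule.coe_norm, ← ht, ← mem_closedBall_zero_iff] at hx
  refine ⟨t, hx, fun w hw => ?_⟩
  have hPw : U.orthogonalProjectionOnto w ∈ closedBall (0 : U) r := by
    rw [mem_closedBall_zero_iff] at hw ⊢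
    exact (U.norm_orthogonalProjectionOnto_apply_le w).trans hw
  calc linQuad c a₂ w ≤ linQuad c a₂ (U.starProjection w) :=
        linQuad_le_starProjection (mem_span_singleton_self c) ha₂ w
    _ ≤ linQuad c a₂ x := hmax hPw
    _ = linQuad c a₂ (t • c) := by rw [ht]

end LinQuad

section Euclidean

variable {ι : Type*} [Fintype ι]

open Metric

theorem linQuad_toLp (c w : ι → ℝ) (a₂ : ℝ) :
    linQuad (WithLp.toLp 2 c) a₂ (WithLp.toLp 2 w) = w ⬝ᵥ c + a₂ / 2 * (w ⬝ᵥ w) := by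
  rw [linQuad, ← real_inner_self_eq_norm_sq, EuclideanSpace.inner_toLp_toLp,
    EuclideanSpace.inner_toLp_toLp, star_trivial, dotProduct_comm]

theorem toLp_mem_closedBall_sqrt_iff (w : ι → ℝ) {K : ℝ} (hK : 0 ≤ K) :
    WithLp.toLp 2 w ∈ closedBall (0 : EuclideanSpace ℝ ι) √K ↔ w ⬝ᵥ w ≤ K := by
  rw [mem_closedBall_zero_iff, Real.le_sqrt (norm_nonneg _) hK, ← real_inner_self_eq_norm_sq,
    EuclideanSpace.inner_toLp_toLp, star_trivial]

theorem exists_smul_maximizer_dotProduct (c : ι → ℝ) {a₂ : ℝ} (ha₂ : a₂ ≤ 0) {K : ℝ}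
    (hK : 0 ≤ K) :
    ∃ t : ℝ, (t • c) ⬝ᵥ (t • c) ≤ K ∧ ∀ w : ι → ℝ, w ⬝ᵥ w ≤ K →
      w ⬝ᵥ c + a₂ / 2 * (w ⬝ᵥ w) ≤ (t • c) ⬝ᵥ c + a₂ / 2 * ((t • c) ⬝ᵥ (t • c)) := by
  obtain ⟨t, ht, hmax⟩ := exists_smul_isMaxOn_linQuad (WithLp.toLp 2 c) ha₂ (Real.sqrt_nonneg K)
  rw [← WithLp.toLp_smul, toLp_mem_closedBall_sqrt_iff _ hK] at ht
  refine ⟨t, ht, fun w hw => ?_⟩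
  have : linQuad (WithLp.toLp 2 c) a₂ (WithLp.toLp 2 w) ≤ linQuad (WithLp.toLp 2 c) a₂ (t • _) :=
    hmax ((toLp_mem_closedBall_sqrt_iff w hK).mpr hw)
  rwa [← WithLp.toLp_smul, linQuad_toLp, linQuad_toLp] at this

end Euclidean

section MatrixLemmas

variable {n R : Type*} [Fintype n]

theorem sum_smul_col_eq_mulVec {m : Type*} [CommSemiring R] (M : Matrix m n R) (x : n → R) :
    ∑ i, x i • (fun j => M j i) = M *ᵥ x := by
  ext j
  simp [mulVec, dotProduct, mul_comm]

theorem dotProduct_mulVec_eq_transpose_mulVec_dotProduct [CommSemiring R] (v : Matrix n n R)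
    (u x : n → R) : u ⬝ᵥ (v *ᵥ x) = (vᵀ *ᵥ u) ⬝ᵥ x := by
  rw [dotProduct_mulVec, mulVec_transpose]

variable [DecidableEq n] [CommRing R] {v : Matrix n n R}

theorem dotProduct_eq_transpose_mulVec_dotProduct_inv_mulVec (hv : IsUnit v.det) (u a : n → R) :
    u ⬝ᵥ a = (vᵀ *ᵥ u) ⬝ᵥ (v⁻¹ *ᵥ a) := by
  rw [← dotProduct_mulVec_eq_transpose_mulVec_dotProduct, mulVec_mulVec, mul_nonsing_inv v hv,
    one_mulVec]

theorem transpose_mulVec_inv_transpose_mulVec (hv : IsUnit v.det) (x : n → R) :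
    vᵀ *ᵥ ((vᵀ)⁻¹ *ᵥ x) = x := by
  rw [mulVec_mulVec, mul_nonsing_inv _ (by rwa [det_transpose]), one_mulVec]

end MatrixLemmas

theorem bellman_maximizer_in_span_of_mutual_funds_general
    (n m : ℕ)
    (v : Matrix (Fin n) (Fin n) ℝ) (hv : IsUnit v.det)
    (a : Fin n → ℝ) (β : Matrix (Fin m) (Fin n) ℝ)
    (K : ℝ) (hK : 0 < K) (a₀ : ℝ) (a₂ : ℝ) (ha₂ : a₂ ≤ 0) (g : Fin m → ℝ)
    (Q : Matrix (Fin n) (Fin n) ℝ) (hQ : Q = (v * vᵀ)⁻¹)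
    (q : Fin n → Fin n → ℝ) (hq : ∀ i j, q i j = (vᵀ)⁻¹ j i)
    (ψ : Fin m → Fin n → ℝ) (hψ : ∀ k, ψ k = ∑ i, β k i • q i)
    (ψlast : Fin n → ℝ) (hψlast : ψlast = Q *ᵥ a)
    (F : (Fin n → ℝ) → ℝ)
    (hF : ∀ u, F u = a₀ * (u ⬝ᵥ a) + (a₂ / 2) * ((vᵀ *ᵥ u) ⬝ᵥ (vᵀ *ᵥ u)) +
        ∑ k, g k * (u ⬝ᵥ ∑ i, β k i • (fun j => v j i))) :
    ∃ (ν : Fin m → ℝ) (νlast : ℝ),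
      (vᵀ *ᵥ (∑ k, ν k • ψ k + νlast • ψlast)) ⬝ᵥ
          (vᵀ *ᵥ (∑ k, ν k • ψ k + νlast • ψlast)) ≤ K ∧
      ∀ u : Fin n → ℝ, (vᵀ *ᵥ u) ⬝ᵥ (vᵀ *ᵥ u) ≤ K →
        F u ≤ F (∑ k, ν k • ψ k + νlast • ψlast) := by
  set c := a₀ • (v⁻¹ *ᵥ a) + g ᵥ* β
  have hF_c : ∀ u, F u = (vᵀ *ᵥ u) ⬝ᵥ c + a₂ / 2 * ((vᵀ *ᵥ u) ⬝ᵥ (vᵀ *ᵥ u)) := fun u => by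
    simp only [hF, c, sum_smul_col_eq_mulVec, dotProduct_mulVec_eq_transpose_mulVec_dotProduct,
      dotProduct_eq_transpose_mulVec_dotProduct_inv_mulVec hv u a, dotProduct_add,
      dotProduct_smul, vecMul_eq_sum, dotProduct_sum, smul_eq_mul]
    ring
  have hψ_fund : ∀ k, ψ k = (vᵀ)⁻¹ *ᵥ β k := fun k => by
    rw [hψ, ← sum_smul_col_eq_mulVec]
    simp only [← hq]
  have h_image : ∀ (ν : Fin m → ℝ) (νlast : ℝ),
      vᵀ *ᵥ (∑ k, ν k • ψ k + νlast • ψlast) = ν ᵥ* β + νlast • (v⁻¹ *ᵥ a) := fun ν νlast => by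
    simp only [hψlast, hQ, hψ_fund, Matrix.mul_inv_rev, ← mulVec_mulVec, mulVec_add, mulVec_smul,
      mulVec_sum, transpose_mulVec_inv_transpose_mulVec hv, vecMul_eq_sum]
  obtain ⟨t, ht, hmax⟩ := exists_smul_maximizer_dotProduct c ha₂ hK.le
  have h_star : vᵀ *ᵥ (∑ k, (t • g) k • ψ k + (t * a₀) • ψlast) = t • c := by
    rw [h_image, smul_add, smul_vecMul, mul_smul, add_comm]
  refine ⟨t • g, t * a₀, h_star ▸ ht, fun u hu => ?_⟩
  rw [hF_c, hF_c, h_star]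
  exact hmax _ hu

/-- finite-dimensional core of the relaxed Mutual Fund Theorem:
with `Q = (v vᵀ)⁻¹`, `q_i` the columns of `(vᵀ)⁻¹`, `ψ_k = Σ_i β_{k i} q_i`
(`k = 1,…,m`) and `ψ_{m+1} = Q a`, the function
`F u = a₀⟨u, a⟩ + (a₂/2) uᵀ v vᵀ u + Σ_k g_k ⟨u, Σ_i β_{k i} v_i⟩` attains its
maximum over `{u : uᵀ v vᵀ u ≤ K}` at a linear combination of `ψ₁,…,ψ_{m+1}`. -/
theorem bellman_maximizer_in_span_of_mutual_funds
    (n m : ℕ) (hmn : m < n)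
    (v : Matrix (Fin n) (Fin n) ℝ) (hv : IsUnit v.det)
    (a : Fin n → ℝ) (β : Matrix (Fin m) (Fin n) ℝ)
    (K : ℝ) (hK : 0 < K) (a₀ : ℝ) (a₂ : ℝ) (ha₂ : a₂ ≤ 0) (g : Fin m → ℝ)
    (Q : Matrix (Fin n) (Fin n) ℝ) (hQ : Q = (v * vᵀ)⁻¹)
    (q : Fin n → Fin n → ℝ) (hq : ∀ i j, q i j = (vᵀ)⁻¹ j i)
    (ψ : Fin m → Fin n → ℝ) (hψ : ∀ k, ψ k = ∑ i, β k i • q i)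
    (ψlast : Fin n → ℝ) (hψlast : ψlast = Q *ᵥ a)
    (F : (Fin n → ℝ) → ℝ)
    (hF : ∀ u, F u = a₀ * (u ⬝ᵥ a) + (a₂ / 2) * ((vᵀ *ᵥ u) ⬝ᵥ (vᵀ *ᵥ u)) +
        ∑ k, g k * (u ⬝ᵥ ∑ i, β k i • (fun j => v j i))) :
    ∃ (ν : Fin m → ℝ) (νlast : ℝ),
      (vᵀ *ᵥ (∑ k, ν k • ψ k + νlast • ψlast)) ⬝ᵥ
          (vᵀ *ᵥ (∑ k, ν k • ψ k + νlast • ψlast)) ≤ K ∧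
      ∀ u : Fin n → ℝ, (vᵀ *ᵥ u) ⬝ᵥ (vᵀ *ᵥ u) ≤ K →
        F u ≤ F (∑ k, ν k • ψ k + νlast • ψlast) :=
  bellman_maximizer_in_span_of_mutual_funds_general n m v hv a β K hK a₀ a₂ ha₂ g Q hQ q hq ψ hψ
    ψlast hψlast F hF
end
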